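/- Let $B$ be a standard Brownian motion and $c>0$. Then the random variable $\sup_{t\geq 0}(B_t - ct)$ has an exponential distribution with parameter $2c$; i.e., for every $N \geq 0$, $P(\sup_{t\geq 0}(B_t - ct) > N) = e^{-2Nc}$. -/

import Mathlib

open MeasureTheory ProbabilityTheory Filter

/-- `B` is a standard one-dimensional Brownian motion starting at `0` under `μ`. -/
def IsStandardBM {Ω : Type*} [MeasurableSpace Ω] (μ : Measure Ω) (B : ℝ → Ω → ℝ) : Prop :=
  (∀ ω, Continuous fun t => B t ω) ∧ (∀ ω, B 0 ω = 0) ∧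
  (∀ t, Measurable (B t)) ∧
  (∀ n : ℕ, ∀ t : ℕ → ℝ, Monotone t → (∀ i, 0 ≤ t i) →
    iIndepFun
      (fun (i : Fin n) ω => B (t (i + 1)) ω - B (t i) ω) μ) ∧
  (∀ s t : ℝ, 0 ≤ s → s ≤ t →
    Measure.map (fun ω => B t ω - B s ω) μ = gaussianReal 0 (ENNReal.ofReal (t - s)).toNNReal)

/-!
With `λ = 2 c`, the process `exp (2 c (B t - c t)) = exp (λ B t - λ ^ 2 t / 2)` is a martingale
with value `1` at time `0`. Sample it on a grid of mesh `h` and stop it at the first grid point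
where `B t - c t` exceeds `N`; by independence of the increments its expectation stays `1`.
At the stopping time it is at least `e^{2cN}`, so the grid crossing probability is at most
`e^{-2cN}`, and by continuity of the paths so is the probability of crossing at all (refine dyadic
grids). Conversely, the stopped value exceeds `e^{2cN}` only through the overshoot of the last
increment, whose contribution is bounded by a Gaussian tail, while the paths not stopped by time
`T` contribute at most `e^{-c²T/8}`. Letting `h → 0` and `T → ∞` suitably gives `e^{-2cN}` as
lower bound.
-/

open Real Set
open scoped NNReal ENNReal Topology

namespace ProbabilityTheory

lemma HasLaw.integrable_comp {Ω 𝓧 : Type*} {mΩ : MeasurableSpace Ω} {m𝓧 : MeasurableSpace 𝓧}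
    {P : Measure Ω} {ν : Measure 𝓧} {X : Ω → 𝓧} (hX : HasLaw X ν P) {f : 𝓧 → ℝ}
    (hf : Integrable f ν) : Integrable (fun ω => f (X ω)) P := by
  rw [← hX.map_eq] at hf
  exact hf.comp_aemeasurable hX.aemeasurable

lemma gaussianPDFReal_mul_exp_tilt (v : ℝ≥0) (hv : v ≠ 0) (t x : ℝ) :
    gaussianPDFReal 0 v x * exp (t * x - t ^ 2 * v / 2) = gaussianPDFReal (t * v) v x := by
  have hv' : (v : ℝ) ≠ 0 := mod_cast hv
  simp only [gaussianPDFReal, sub_zero, mul_assoc, ← exp_add]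
  congr 2
  field_simp
  ring

lemma integral_exp_tilt_mul_gaussianReal (v : ℝ≥0) (t : ℝ) (g : ℝ → ℝ) :
    ∫ x, exp (t * x - t ^ 2 * v / 2) * g x ∂gaussianReal 0 v
      = ∫ x, g x ∂gaussianReal (t * v) v := by
  rcases eq_or_ne v 0 with rfl | hv
  · simp [gaussianReal_zero_var]
  simp only [integral_gaussianReal_eq_integral_smul hv, smul_eq_mul, ← mul_assoc,
    gaussianPDFReal_mul_exp_tilt v hv]

lemma hasSubgaussianMGF_sub_gaussianReal (m : ℝ) (v : ℝ≥0) :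
    HasSubgaussianMGF (fun x => x - m) v (gaussianReal m v) where
  integrable_exp_mul t := by
    simpa [mul_sub, exp_sub] using
      (integrable_exp_mul_gaussianReal (μ := m) (v := v) t).div_const (exp (t * m))
  mgf_le t := by
    rw [mgf_gaussianReal (μ := 0) (by simpa using gaussianReal_map_sub_const (μ := m) (v := v) m)]
    simp

lemma gaussianReal_real_ge_le (m : ℝ) (v : ℝ≥0) {ε : ℝ} (hε : 0 ≤ ε) :
    (gaussianReal m v).real {x | m + ε ≤ x} ≤ exp (-ε ^ 2 / (2 * v)) := by
  simpa only [le_sub_iff_add_le'] using (hasSubgaussianMGF_sub_gaussianReal m v).measure_ge_le hε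

lemma gaussianReal_real_le_le (m : ℝ) (v : ℝ≥0) {ε : ℝ} (hε : 0 ≤ ε) :
    (gaussianReal m v).real {x | x ≤ m - ε} ≤ exp (-ε ^ 2 / (2 * v)) := by
  convert (hasSubgaussianMGF_sub_gaussianReal m v).neg.measure_ge_le hε using 3
  ext x
  simp only [Pi.neg_apply, neg_sub]
  constructor <;> intro <;> linarith

lemma integral_exp_tilt_gaussianReal (v : ℝ≥0) (t : ℝ) :
    ∫ x, exp (t * x - t ^ 2 * v / 2) ∂gaussianReal 0 v = 1 := by
  simpa using integral_exp_tilt_mul_gaussianReal v t 1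

lemma setIntegral_exp_tilt_gaussianReal (v : ℝ≥0) (t : ℝ) {s : Set ℝ} (hs : MeasurableSet s) :
    ∫ x in s, exp (t * x - t ^ 2 * v / 2) ∂gaussianReal 0 v = (gaussianReal (t * v) v).real s := by
  rw [← integral_indicator hs, ← integral_indicator_one hs, ← integral_exp_tilt_mul_gaussianReal]
  congr 1 with x
  by_cases hx : x ∈ s <;> simp [hx]

lemma setIntegral_Iic_exp_tilt_gaussianReal_le (v : ℝ≥0) (t : ℝ) {b ε : ℝ} (hε : 0 ≤ ε)
    (hb : b + ε ≤ t * v) :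
    ∫ x in Iic b, exp (t * x - t ^ 2 * v / 2) ∂gaussianReal 0 v ≤ exp (-ε ^ 2 / (2 * v)) := by
  rw [setIntegral_exp_tilt_gaussianReal v t measurableSet_Iic]
  refine le_trans (measureReal_mono fun x (hx : x ≤ b) => ?_) (gaussianReal_real_le_le _ v hε)
  show x ≤ t * v - ε
  linarith

lemma setIntegral_Ioi_exp_tilt_gaussianReal_le (v : ℝ≥0) (t : ℝ) {a ε : ℝ} (hε : 0 ≤ ε)
    (ha : t * v + ε ≤ a) :
    ∫ x in Ioi a, exp (t * x - t ^ 2 * v / 2) ∂gaussianReal 0 v ≤ exp (-ε ^ 2 / (2 * v)) := by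
  rw [setIntegral_exp_tilt_gaussianReal v t measurableSet_Ioi]
  refine le_trans (measureReal_mono fun x (hx : a < x) => ?_) (gaussianReal_real_ge_le _ v hε)
  show t * v + ε ≤ x
  linarith

end ProbabilityTheory

abbrev gridPast {Ω : Type*} (B : ℝ → Ω → ℝ) (h : ℝ) (k : ℕ) : MeasurableSpace Ω :=
  ⨆ j ≤ k, MeasurableSpace.comap (B (j * h)) inferInstance

lemma measurable_gridPast {Ω : Type*} {B : ℝ → Ω → ℝ} {h : ℝ} {j k : ℕ} (hjk : j ≤ k) :
    Measurable[gridPast B h k] (B (j * h)) :=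
  Measurable.of_comap_le (le_iSup₂ (f := fun j (_ : j ≤ k) =>
    MeasurableSpace.comap (B (j * h)) inferInstance) j hjk)

namespace IsStandardBM

variable {Ω : Type*} [MeasurableSpace Ω] {μ : Measure Ω} {B : ℝ → Ω → ℝ} {h : ℝ}

lemma continuous_path (hB : IsStandardBM μ B) (ω : Ω) : Continuous fun t => B t ω := hB.1 ω

lemma apply_zero (hB : IsStandardBM μ B) (ω : Ω) : B 0 ω = 0 := hB.2.1 ω

lemma measurable (hB : IsStandardBM μ B) (t : ℝ) : Measurable (B t) := hB.2.2.1 t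

lemma iIndepFun_incr (hB : IsStandardBM μ B) (n : ℕ) {t : ℕ → ℝ} (ht : Monotone t)
    (ht0 : ∀ i, 0 ≤ t i) : iIndepFun (fun (i : Fin n) ω => B (t (i + 1)) ω - B (t i) ω) μ :=
  hB.2.2.2.1 n t ht ht0

lemma hasLaw_sub (hB : IsStandardBM μ B) {s t : ℝ} (hs : 0 ≤ s) (hst : s ≤ t) :
    HasLaw (fun ω => B t ω - B s ω) (gaussianReal 0 (t - s).toNNReal) μ where
  aemeasurable := ((hB.measurable t).sub (hB.measurable s)).aemeasurable
  map_eq := by rw [hB.2.2.2.2 s t hs hst]; rfl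

lemma hasLaw (hB : IsStandardBM μ B) {t : ℝ} (ht : 0 ≤ t) :
    HasLaw (B t) (gaussianReal 0 t.toNNReal) μ := by
  simpa [hB.apply_zero] using hB.hasLaw_sub le_rfl ht

lemma gridPast_le (hB : IsStandardBM μ B) (h : ℝ) (k : ℕ) : gridPast B h k ≤ ‹_› :=
  iSup₂_le fun _ _ => (hB.measurable _).comap_le

lemma indep_gridPast_incr (hB : IsStandardBM μ B) (hh : 0 ≤ h) (k : ℕ) :
    Indep (gridPast B h k)
      (MeasurableSpace.comap (fun ω => B ((k + 1) * h) ω - B (k * h) ω) inferInstance) μ := by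
  set D : Fin (k + 1) → Ω → ℝ := fun i ω => B (((i : ℕ) + 1 : ℕ) * h) ω - B ((i : ℕ) * h) ω
  have hD : iIndepFun D μ := hB.iIndepFun_incr (k + 1) (t := fun j => j * h)
    (fun _ _ hij => mul_le_mul_of_nonneg_right (Nat.cast_le.2 hij) hh) (fun i => by positivity)
  -- The grid values up to `k * h` are partial sums of the increments `D i`, `i < k`.
  have hpast : gridPast B h k ≤ ⨆ i ∈ {i : Fin (k + 1) | (i : ℕ) < k},
      MeasurableSpace.comap (D i) inferInstance := by
    refine iSup₂_le fun j hj => Measurable.comap_le ?_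
    have hsum : B (j * h) = fun ω => ∑ i ∈ Finset.range j,
        (B (((i + 1 : ℕ) : ℝ) * h) ω - B (i * h) ω) := by
      ext ω
      rw [Finset.sum_range_sub (fun i : ℕ => B (i * h) ω)]
      simp [hB.apply_zero]
    rw [hsum]
    refine Finset.measurable_sum _ fun i hi => ?_
    have hik : i < k + 1 := by simp at hi; omega
    exact Measurable.of_comap_le (le_iSup₂ (f := fun i (_ : i ∈ {i : Fin (k + 1) | (i : ℕ) < k}) =>
      MeasurableSpace.comap (D i) inferInstance) ⟨i, hik⟩ (by simp at hi ⊢; omega))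
  have hindep := indep_iSup_of_disjoint (fun i => (((hB.measurable _).sub
    (hB.measurable _)).comap_le)) hD.iIndep
    (S := {i : Fin (k + 1) | (i : ℕ) < k}) (T := {Fin.last k})
    (by simp)
  rw [iSup_singleton] at hindep
  convert indep_of_indep_of_le_left hindep hpast using 3
  simp

lemma integral_mul_comp_incr (hB : IsStandardBM μ B) (hh : 0 ≤ h) {k : ℕ}
    {Z : Ω → ℝ} (hZ : Measurable[gridPast B h k] Z) {g : ℝ → ℝ} (hg : Measurable g) :
    ∫ ω, Z ω * g (B ((k + 1) * h) ω - B (k * h) ω) ∂μ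
      = (∫ ω, Z ω ∂μ) * ∫ x, g x ∂gaussianReal 0 h.toNNReal := by
  have hlaw := hB.hasLaw_sub (s := k * h) (t := (k + 1) * h) (by positivity) (by nlinarith)
  rw [show (k + 1) * h - k * h = h by ring] at hlaw
  have hindep : IndepFun Z (fun ω => g (B ((k + 1) * h) ω - B (k * h) ω)) μ :=
    (((IndepFun_iff_Indep _ _ _).2 (indep_of_indep_of_le_left (hB.indep_gridPast_incr hh k)
      hZ.comap_le)).comp measurable_id hg)
  rw [← hlaw.integral_comp hg.aestronglyMeasurable]
  exact hindep.integral_mul_eq_mul_integral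
    (hZ.mono (hB.gridPast_le h k) le_rfl).aestronglyMeasurable
    (hg.comp_aemeasurable hlaw.aemeasurable).aestronglyMeasurable

lemma setIntegral_mul_comp_incr (hB : IsStandardBM μ B) (hh : 0 ≤ h) {k : ℕ} {E : Set Ω}
    (hE : MeasurableSet[gridPast B h k] E) {Z : Ω → ℝ} (hZ : Measurable[gridPast B h k] Z)
    {g : ℝ → ℝ} (hg : Measurable g) :
    ∫ ω in E, Z ω * g (B ((k + 1) * h) ω - B (k * h) ω) ∂μ
      = (∫ ω in E, Z ω ∂μ) * ∫ x, g x ∂gaussianReal 0 h.toNNReal := by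
  have hE' := hB.gridPast_le h k E hE
  simp only [← integral_indicator hE', indicator_mul_left]
  exact hB.integral_mul_comp_incr hh (hZ.indicator hE) hg

end IsStandardBM

section Grid

variable {Ω : Type*} {B : ℝ → Ω → ℝ} {c N h : ℝ}

def gridBelow (B : ℝ → Ω → ℝ) (c N h : ℝ) (k : ℕ) : Set Ω :=
  {ω | ∀ j ≤ k, B (j * h) ω - c * (j * h) ≤ N}

def gridCross (B : ℝ → Ω → ℝ) (c N h : ℝ) (k : ℕ) : Set Ω :=
  gridBelow B c N h k \ gridBelow B c N h (k + 1)

/-- With `λ = 2 c` this is the exponential martingale `exp (λ B t - λ ^ 2 t / 2)` on the grid. -/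
noncomputable def gridExpMart (B : ℝ → Ω → ℝ) (c h : ℝ) (k : ℕ) (ω : Ω) : ℝ :=
  exp (2 * c * (B (k * h) ω - c * (k * h)))

lemma gridBelow_antitone : Antitone (gridBelow B c N h) :=
  fun _ _ hjk _ hω i hi => hω i (hi.trans hjk)

lemma gridBelow_zero (hB0 : ∀ ω, B 0 ω = 0) (hN : 0 ≤ N) : gridBelow B c N h 0 = univ := by
  ext ω
  simp [gridBelow, hB0, hN]

lemma mem_compl_gridBelow {n : ℕ} {ω : Ω} :
    ω ∈ (gridBelow B c N h n)ᶜ ↔ ∃ j ≤ n, N < B (j * h) ω - c * (j * h) := by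
  simp only [gridBelow, mem_compl_iff, mem_ofPred_eq, not_forall, not_le, exists_prop]

lemma gridCross_subset (k : ℕ) : gridCross B c N h k ⊆ gridBelow B c N h k := sdiff_subset

lemma lt_of_mem_gridCross {k : ℕ} {ω : Ω} (hω : ω ∈ gridCross B c N h k) :
    N < B ((k + 1) * h) ω - c * ((k + 1) * h) := by
  obtain ⟨j, hj, hlt⟩ := mem_compl_gridBelow.1 hω.2
  rcases Nat.lt_or_eq_of_le hj with hj | rfl
  · exact absurd (hω.1 j (Nat.lt_succ_iff.1 hj)) hlt.not_ge
  · exact_mod_cast hlt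

lemma gridExpMart_zero (hB0 : ∀ ω, B 0 ω = 0) : gridExpMart B c h 0 = 1 := by
  ext ω
  simp [gridExpMart, hB0]

lemma gridExpMart_succ (k : ℕ) (ω : Ω) :
    gridExpMart B c h (k + 1) ω = gridExpMart B c h k ω
      * exp (2 * c * (B ((k + 1) * h) ω - B (k * h) ω) - 2 * c ^ 2 * h) := by
  simp only [gridExpMart, ← exp_add]
  push_cast
  ring_nf

lemma gridExpMart_nonneg (k : ℕ) (ω : Ω) : 0 ≤ gridExpMart B c h k ω := (exp_pos _).le

lemma gridExpMart_le_of_mem_gridBelow (hc : 0 ≤ c) {k : ℕ} {ω : Ω}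
    (hω : ω ∈ gridBelow B c N h k) : gridExpMart B c h k ω ≤ exp (2 * c * N) :=
  exp_le_exp.2 (mul_le_mul_of_nonneg_left (hω k le_rfl) (by positivity))

lemma exp_le_gridExpMart_of_mem_gridCross (hc : 0 ≤ c) {k : ℕ} {ω : Ω}
    (hω : ω ∈ gridCross B c N h k) : exp (2 * c * N) ≤ gridExpMart B c h (k + 1) ω := by
  refine exp_le_exp.2 (mul_le_mul_of_nonneg_left ?_ (by positivity))
  exact_mod_cast (lt_of_mem_gridCross hω).le

/-- The overshoot over `N` comes from the last increment only: it is small, or it lies in the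
Gaussian tail `{increment > a}`. -/
lemma gridExpMart_succ_le_of_mem_gridCross (hc : 0 ≤ c) (hh : 0 ≤ h) {k : ℕ} {a : ℝ} {ω : Ω}
    (hω : ω ∈ gridCross B c N h k) :
    gridExpMart B c h (k + 1) ω ≤ exp (2 * c * (N + a)) + exp (2 * c * N)
      * (Ioi a).indicator (fun x => exp (2 * c * x - 2 * c ^ 2 * h))
        (B ((k + 1) * h) ω - B (k * h) ω) := by
  rw [gridExpMart_succ]
  set D := B ((k + 1) * h) ω - B (k * h) ω
  have hX := gridExpMart_le_of_mem_gridBelow hc (gridCross_subset k hω)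
  by_cases hDa : D ≤ a
  · calc gridExpMart B c h k ω * exp (2 * c * D - 2 * c ^ 2 * h)
        ≤ exp (2 * c * N) * exp (2 * c * a) :=
          mul_le_mul hX (exp_le_exp.2 (by nlinarith [mul_nonneg (sq_nonneg c) hh]))
            (exp_pos _).le (exp_pos _).le
      _ = exp (2 * c * (N + a)) := by rw [← exp_add]; ring_nf
      _ ≤ _ := le_add_of_nonneg_right (mul_nonneg (exp_pos _).le
          (indicator_nonneg (fun _ _ => (exp_pos _).le) _))
  · rw [indicator_of_mem (show D ∈ Ioi a from not_le.1 hDa)]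
    nlinarith [mul_le_mul_of_nonneg_right hX (exp_pos (2 * c * D - 2 * c ^ 2 * h)).le,
      exp_pos (2 * c * (N + a))]

lemma measurableSet_gridBelow_gridPast (k : ℕ) :
    MeasurableSet[gridPast B h k] (gridBelow B c N h k) := by
  have : gridBelow B c N h k = ⋂ j ∈ Finset.range (k + 1), {ω | B (j * h) ω - c * (j * h) ≤ N} := by
    ext ω
    simp [gridBelow]
  rw [this]
  exact Finset.measurableSet_biInter _ fun j hj =>
    measurableSet_le ((measurable_gridPast (by simpa [Nat.lt_succ_iff] using hj)).sub_const _)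
      measurable_const

lemma measurable_gridExpMart_gridPast (k : ℕ) : Measurable[gridPast B h k] (gridExpMart B c h k) :=
  (((measurable_gridPast le_rfl).sub_const _).const_mul _).exp

end Grid

section Dyadic

variable {Ω : Type*} {B : ℝ → Ω → ℝ} {c N : ℝ}

lemma compl_gridBelow_subset {h : ℝ} (hh : 0 ≤ h) (n : ℕ) :
    (gridBelow B c N h n)ᶜ ⊆ {ω | ∃ t : ℝ, 0 ≤ t ∧ B t ω - c * t > N} := fun ω hω => by
  obtain ⟨j, -, hj⟩ := mem_compl_gridBelow.1 hω
  exact ⟨j * h, by positivity, hj⟩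

lemma monotone_compl_gridBelow_dyadic :
    Monotone fun m : ℕ => (gridBelow B c N ((2 ^ m)⁻¹) (4 ^ m))ᶜ := by
  refine monotone_nat_of_le_succ fun m ω hω => ?_
  obtain ⟨j, hj, hlt⟩ := mem_compl_gridBelow.1 hω
  refine mem_compl_gridBelow.2 ⟨2 * j, by rw [pow_succ]; omega, ?_⟩
  convert hlt using 3 <;> · push_cast; rw [pow_succ]; field_simp

lemma exists_mem_compl_gridBelow_dyadic {ω : Ω} (hcont : Continuous fun t => B t ω) {t : ℝ}
    (ht : 0 ≤ t) (hN : N < B t ω - c * t) :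
    ∃ m : ℕ, ω ∈ (gridBelow B c N ((2 ^ m)⁻¹) (4 ^ m))ᶜ := by
  set s : ℕ → ℝ := fun m => ⌈t * 2 ^ m⌉₊ * (2 ^ m)⁻¹
  have hpow : Tendsto (fun m : ℕ => (2 : ℝ) ^ m) atTop atTop :=
    tendsto_pow_atTop_atTop_of_one_lt one_lt_two
  have hs : Tendsto s atTop (𝓝 t) := by
    refine tendsto_of_tendsto_of_tendsto_of_le_of_le tendsto_const_nhds
      (by simpa using (tendsto_inv_atTop_zero.comp hpow).const_add t) (fun m => ?_) (fun m => ?_)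
    · simpa [s, le_mul_inv_iff₀] using Nat.le_ceil (t * 2 ^ m)
    · have := Nat.ceil_lt_add_one (by positivity : 0 ≤ t * 2 ^ m)
      rw [mul_inv_le_iff₀ (by positivity), add_mul, inv_mul_cancel₀ (by positivity)]
      exact this.le
  have hcross : ∀ᶠ m in atTop, N < B (s m) ω - c * s m :=
    ((hcont.sub (continuous_const.mul continuous_id)).tendsto t |>.comp hs).eventually_const_lt hN
  have hle : ∀ᶠ m in atTop, ⌈t * 2 ^ m⌉₊ ≤ 4 ^ m := by
    filter_upwards [hpow.eventually_ge_atTop t] with m hm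
    rw [Nat.ceil_le]
    push_cast
    rw [show (4 : ℝ) ^ m = 2 ^ m * 2 ^ m by rw [← mul_pow]; norm_num]
    exact mul_le_mul_of_nonneg_right hm (by positivity)
  obtain ⟨m, hm, hmle⟩ := (hcross.and hle).exists
  exact ⟨m, mem_compl_gridBelow.2 ⟨_, hmle, hm⟩⟩

end Dyadic

namespace IsStandardBM

variable {Ω : Type*} [MeasurableSpace Ω] {μ : Measure Ω} {B : ℝ → Ω → ℝ} {c N h : ℝ}

lemma measurableSet_gridBelow (hB : IsStandardBM μ B) (k : ℕ) :
    MeasurableSet (gridBelow B c N h k) :=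
  hB.gridPast_le h k _ (measurableSet_gridBelow_gridPast k)

lemma measurableSet_gridCross (hB : IsStandardBM μ B) (k : ℕ) :
    MeasurableSet (gridCross B c N h k) :=
  (hB.measurableSet_gridBelow k).diff (hB.measurableSet_gridBelow (k + 1))

lemma integrable_gridExpMart (hB : IsStandardBM μ B) (hh : 0 ≤ h) (k : ℕ) :
    Integrable (gridExpMart B c h k) μ := by
  refine (hB.hasLaw (t := k * h) (by positivity)).integrable_comp
    (f := fun x => exp (2 * c * (x - c * (k * h)))) ?_
  simpa [mul_sub, exp_sub] using
    (integrable_exp_mul_gaussianReal (μ := 0) (v := (k * h).toNNReal) (2 * c)).div_const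
      (exp (2 * c * (c * (k * h))))

lemma setIntegral_gridBelow_gridExpMart_succ (hB : IsStandardBM μ B) (hh : 0 ≤ h) (k : ℕ) :
    ∫ ω in gridBelow B c N h k, gridExpMart B c h (k + 1) ω ∂μ
      = ∫ ω in gridBelow B c N h k, gridExpMart B c h k ω ∂μ := by
  have hmart : ∫ x, exp (2 * c * x - 2 * c ^ 2 * h) ∂gaussianReal 0 h.toNNReal = 1 := by
    convert integral_exp_tilt_gaussianReal h.toNNReal (2 * c) using 4
    rw [Real.coe_toNNReal h hh]
    ring
  simp only [gridExpMart_succ]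
  rw [hB.setIntegral_mul_comp_incr hh (measurableSet_gridBelow_gridPast k)
    (measurable_gridExpMart_gridPast k) (g := fun x => exp (2 * c * x - 2 * c ^ 2 * h))
    (by fun_prop), hmart, mul_one]

/-- Optional stopping: the left side is the expectation of the grid martingale stopped at its
first crossing of `N`. -/
lemma setIntegral_gridExpMart_add_sum_gridCross [IsProbabilityMeasure μ] (hB : IsStandardBM μ B)
    (hN : 0 ≤ N) (hh : 0 ≤ h) (n : ℕ) :
    ∫ ω in gridBelow B c N h n, gridExpMart B c h n ω ∂μ
      + ∑ k ∈ Finset.range n, ∫ ω in gridCross B c N h k, gridExpMart B c h (k + 1) ω ∂μ = 1 := by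
  have hstep (k : ℕ) : ∫ ω in gridCross B c N h k, gridExpMart B c h (k + 1) ω ∂μ
      = ∫ ω in gridBelow B c N h k, gridExpMart B c h k ω ∂μ
        - ∫ ω in gridBelow B c N h (k + 1), gridExpMart B c h (k + 1) ω ∂μ := by
    rw [gridCross, setIntegral_sdiff (hB.measurableSet_gridBelow _)
      (hB.integrable_gridExpMart hh _).integrableOn (gridBelow_antitone k.le_succ),
      hB.setIntegral_gridBelow_gridExpMart_succ hh]
  simp only [hstep, Finset.sum_range_sub', gridBelow_zero hB.apply_zero hN,
    gridExpMart_zero hB.apply_zero]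
  simp

lemma sum_measureReal_gridCross [IsProbabilityMeasure μ] (hB : IsStandardBM μ B) (hN : 0 ≤ N)
    (n : ℕ) :
    ∑ k ∈ Finset.range n, μ.real (gridCross B c N h k) = μ.real (gridBelow B c N h n)ᶜ := by
  have hstep (k : ℕ) : μ.real (gridCross B c N h k)
      = μ.real (gridBelow B c N h k) - μ.real (gridBelow B c N h (k + 1)) :=
    measureReal_sdiff (gridBelow_antitone k.le_succ) (hB.measurableSet_gridBelow _)
  simp only [hstep, Finset.sum_range_sub', gridBelow_zero hB.apply_zero hN,
    probReal_compl_eq_one_sub (hB.measurableSet_gridBelow n), probReal_univ]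

lemma measureReal_compl_gridBelow_le [IsProbabilityMeasure μ] (hB : IsStandardBM μ B)
    (hc : 0 ≤ c) (hN : 0 ≤ N) (hh : 0 ≤ h) (n : ℕ) :
    μ.real (gridBelow B c N h n)ᶜ ≤ exp (-(2 * c * N)) := by
  rw [exp_neg, ← mul_one (exp _)⁻¹, le_inv_mul_iff₀ (exp_pos _)]
  have hstopped := hB.setIntegral_gridExpMart_add_sum_gridCross (c := c) hN hh n
  have hnonneg : 0 ≤ ∫ ω in gridBelow B c N h n, gridExpMart B c h n ω ∂μ :=
    setIntegral_nonneg (hB.measurableSet_gridBelow n) fun ω _ => gridExpMart_nonneg n ω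
  calc exp (2 * c * N) * μ.real (gridBelow B c N h n)ᶜ
      = ∑ k ∈ Finset.range n, ∫ _ in gridCross B c N h k, exp (2 * c * N) ∂μ := by
        simp [← hB.sum_measureReal_gridCross hN, Finset.mul_sum, mul_comm]
    _ ≤ ∑ k ∈ Finset.range n, ∫ ω in gridCross B c N h k, gridExpMart B c h (k + 1) ω ∂μ :=
        Finset.sum_le_sum fun k _ => setIntegral_mono_on (integrableOn_const)
          (hB.integrable_gridExpMart hh _).integrableOn (hB.measurableSet_gridCross k)
          fun ω hω => exp_le_gridExpMart_of_mem_gridCross hc hω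
    _ ≤ 1 := by linarith

lemma setIntegral_gridBelow_gridExpMart_le (hB : IsStandardBM μ B) (hc : 0 ≤ c) (hh : 0 ≤ h)
    {n : ℕ} (hT : 2 * N ≤ c * (n * h)) :
    ∫ ω in gridBelow B c N h n, gridExpMart B c h n ω ∂μ ≤ exp (-(c ^ 2 * (n * h) / 8)) := by
  set T : ℝ := n * h
  have hT0 : 0 ≤ T := by positivity
  have hv : ((T.toNNReal : ℝ≥0) : ℝ) = T := Real.coe_toNNReal T hT0
  have hlaw := hB.hasLaw hT0
  have hsub : gridBelow B c N h n ⊆ B T ⁻¹' Iic (N + c * T) := fun ω hω => by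
    have := hω n le_rfl
    simp only [mem_preimage, mem_Iic]
    linarith
  calc ∫ ω in gridBelow B c N h n, gridExpMart B c h n ω ∂μ
      ≤ ∫ ω in B T ⁻¹' Iic (N + c * T), gridExpMart B c h n ω ∂μ :=
        setIntegral_mono_set (hB.integrable_gridExpMart hh n).integrableOn
          (ae_of_all _ (gridExpMart_nonneg n)) hsub.eventuallyLE
    _ = ∫ x in Iic (N + c * T), exp (2 * c * x - (2 * c) ^ 2 * T.toNNReal / 2)
          ∂gaussianReal 0 T.toNNReal := by
        rw [← hlaw.map_eq, setIntegral_map measurableSet_Iic (by fun_prop) hlaw.aemeasurable, hv]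
        congr with ω
        simp only [gridExpMart, T]
        ring_nf
    _ ≤ exp (-(c * T / 2) ^ 2 / (2 * T.toNNReal)) :=
        setIntegral_Iic_exp_tilt_gaussianReal_le _ _ (by positivity) (by rw [hv]; linarith)
    _ = exp (-(c ^ 2 * T / 8)) := by
        rw [hv]
        rcases eq_or_ne T 0 with h0 | h0
        · simp [h0]
        · congr 1
          field_simp
          ring

lemma setIntegral_gridBelow_overshoot_le (hB : IsStandardBM μ B) [IsProbabilityMeasure μ]
    (hc : 0 ≤ c) (hh : 0 ≤ h) (k : ℕ) {a : ℝ} (ha : 4 * c * h ≤ a) :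
    ∫ ω in gridBelow B c N h k, (Ioi a).indicator (fun x => exp (2 * c * x - 2 * c ^ 2 * h))
      (B ((k + 1) * h) ω - B (k * h) ω) ∂μ ≤ exp (-a ^ 2 / (8 * h)) := by
  have hv : ((h.toNNReal : ℝ≥0) : ℝ) = h := Real.coe_toNNReal h hh
  have hfactor := hB.setIntegral_mul_comp_incr hh
    (measurableSet_gridBelow_gridPast (c := c) (N := N) k) (measurable_const (a := (1 : ℝ)))
    ((by fun_prop : Measurable fun x => exp (2 * c * x - 2 * c ^ 2 * h)).indicator
      (measurableSet_Ioi (a := a))) (μ := μ)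
  simp only [one_mul, setIntegral_const, smul_eq_mul, mul_one] at hfactor
  set φ : ℝ → ℝ := (Ioi a).indicator fun x => exp (2 * c * x - 2 * c ^ 2 * h)
  have htail : ∫ x, φ x ∂gaussianReal 0 h.toNNReal ≤ exp (-a ^ 2 / (8 * h)) := by
    calc ∫ x, φ x ∂gaussianReal 0 h.toNNReal
        = ∫ x in Ioi a, exp (2 * c * x - (2 * c) ^ 2 * h.toNNReal / 2)
            ∂gaussianReal 0 h.toNNReal := by
          rw [integral_indicator measurableSet_Ioi, hv]
          ring_nf
      _ ≤ exp (-(a / 2) ^ 2 / (2 * h.toNNReal)) :=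
          setIntegral_Ioi_exp_tilt_gaussianReal_le _ _ (a := a) (by nlinarith)
            (by rw [hv]; linarith)
      _ = exp (-a ^ 2 / (8 * h)) := by rw [hv]; ring_nf
  rw [hfactor]
  exact (mul_le_of_le_one_left (integral_nonneg fun x => indicator_nonneg
    (fun _ _ => (exp_pos _).le) x) measureReal_le_one).trans htail

lemma setIntegral_gridCross_gridExpMart_le [IsProbabilityMeasure μ] (hB : IsStandardBM μ B)
    (hc : 0 ≤ c) (hh : 0 ≤ h) (k : ℕ) {a : ℝ} (ha : 4 * c * h ≤ a) :
    ∫ ω in gridCross B c N h k, gridExpMart B c h (k + 1) ω ∂μ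
      ≤ exp (2 * c * (N + a)) * μ.real (gridCross B c N h k)
        + exp (2 * c * N - a ^ 2 / (8 * h)) := by
  set φ : Ω → ℝ := fun ω => (Ioi a).indicator (fun x => exp (2 * c * x - 2 * c ^ 2 * h))
    (B ((k + 1) * h) ω - B (k * h) ω)
  have hφ : Integrable φ μ := by
    have hlaw := hB.hasLaw_sub (s := k * h) (t := (k + 1) * h) (by positivity) (by nlinarith)
    rw [show (k + 1) * h - k * h = h by ring] at hlaw
    refine hlaw.integrable_comp (Integrable.indicator ?_ measurableSet_Ioi)
    simpa [mul_sub, exp_sub] using (integrable_exp_mul_gaussianReal (μ := 0) (v := h.toNNReal)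
      (2 * c)).div_const (exp (2 * c ^ 2 * h))
  have hφ_nonneg (ω : Ω) : 0 ≤ φ ω := indicator_nonneg (fun _ _ => (exp_pos _).le) _
  calc ∫ ω in gridCross B c N h k, gridExpMart B c h (k + 1) ω ∂μ
      ≤ ∫ ω in gridCross B c N h k, (exp (2 * c * (N + a)) + exp (2 * c * N) * φ ω) ∂μ :=
        setIntegral_mono_on (hB.integrable_gridExpMart hh _).integrableOn
          ((integrable_const _).add (hφ.const_mul _)).integrableOn
          (hB.measurableSet_gridCross k) fun ω hω => gridExpMart_succ_le_of_mem_gridCross hc hh hω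
    _ = exp (2 * c * (N + a)) * μ.real (gridCross B c N h k)
          + exp (2 * c * N) * ∫ ω in gridCross B c N h k, φ ω ∂μ := by
        rw [integral_add (integrable_const _).integrableOn (hφ.const_mul _).integrableOn,
          setIntegral_const, integral_const_mul, smul_eq_mul, mul_comm]
    _ ≤ exp (2 * c * (N + a)) * μ.real (gridCross B c N h k)
          + exp (2 * c * N) * exp (-a ^ 2 / (8 * h)) := by
        gcongr
        exact (setIntegral_mono_set hφ.integrableOn (ae_of_all _ hφ_nonneg)
          (gridCross_subset k).eventuallyLE).trans
          (hB.setIntegral_gridBelow_overshoot_le hc hh k ha)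
    _ = _ := by rw [← exp_add]; ring_nf

end IsStandardBM

namespace IsStandardBM

variable {Ω : Type*} [MeasurableSpace Ω] {μ : Measure Ω} [IsProbabilityMeasure μ]
  {B : ℝ → Ω → ℝ} {c N : ℝ}

lemma measure_exists_sub_mul_gt_le (hB : IsStandardBM μ B) (hc : 0 ≤ c) (hN : 0 ≤ N) :
    μ {ω | ∃ t : ℝ, 0 ≤ t ∧ B t ω - c * t > N} ≤ ENNReal.ofReal (exp (-(2 * c * N))) := by
  have hgrid (m : ℕ) :
      μ (gridBelow B c N ((2 ^ m)⁻¹) (4 ^ m))ᶜ ≤ ENNReal.ofReal (exp (-(2 * c * N))) := by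
    rw [← ofReal_measureReal]
    exact ENNReal.ofReal_le_ofReal (hB.measureReal_compl_gridBelow_le hc hN (by positivity) _)
  calc μ {ω | ∃ t : ℝ, 0 ≤ t ∧ B t ω - c * t > N}
      ≤ μ (⋃ m : ℕ, (gridBelow B c N ((2 ^ m)⁻¹) (4 ^ m))ᶜ) :=
        measure_mono fun ω ⟨t, ht, hN⟩ =>
          mem_iUnion.2 (exists_mem_compl_gridBelow_dyadic (hB.continuous_path ω) ht hN)
    _ = ⨆ m : ℕ, μ (gridBelow B c N ((2 ^ m)⁻¹) (4 ^ m))ᶜ :=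
        monotone_compl_gridBelow_dyadic.measure_iUnion
    _ ≤ _ := iSup_le hgrid

lemma one_le_tail_add_crossing_add_overshoot (hB : IsStandardBM μ B) (hc : 0 ≤ c) (hN : 0 ≤ N)
    {h : ℝ} (hh : 0 ≤ h) {n : ℕ} (hT : 2 * N ≤ c * (n * h)) {a : ℝ} (ha : 4 * c * h ≤ a) :
    1 ≤ exp (-(c ^ 2 * (n * h) / 8))
      + exp (2 * c * (N + a)) * μ.real {ω | ∃ t : ℝ, 0 ≤ t ∧ B t ω - c * t > N}
      + n * exp (2 * c * N - a ^ 2 / (8 * h)) := by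
  have hcross : ∑ k ∈ Finset.range n, μ.real (gridCross B c N h k)
      ≤ μ.real {ω | ∃ t : ℝ, 0 ≤ t ∧ B t ω - c * t > N} := by
    rw [hB.sum_measureReal_gridCross hN]
    exact measureReal_mono (compl_gridBelow_subset hh n)
  rw [← hB.setIntegral_gridExpMart_add_sum_gridCross (c := c) hN hh n]
  calc _ ≤ exp (-(c ^ 2 * (n * h) / 8)) + ∑ k ∈ Finset.range n,
          (exp (2 * c * (N + a)) * μ.real (gridCross B c N h k)
            + exp (2 * c * N - a ^ 2 / (8 * h))) :=
        add_le_add (hB.setIntegral_gridBelow_gridExpMart_le hc hh hT)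
          (Finset.sum_le_sum fun k _ => hB.setIntegral_gridCross_gridExpMart_le hc hh k ha)
    _ = exp (-(c ^ 2 * (n * h) / 8))
          + exp (2 * c * (N + a)) * ∑ k ∈ Finset.range n, μ.real (gridCross B c N h k)
          + n * exp (2 * c * N - a ^ 2 / (8 * h)) := by
        rw [Finset.sum_add_distrib, ← Finset.mul_sum, Finset.sum_const, Finset.card_range,
          nsmul_eq_mul, add_assoc]
    _ ≤ _ := by gcongr

/-- Mesh `h = 1 / (8 m³)`, horizon `n h = m` and overshoot allowance `a = 1 / m`, so that the
overshoot exponent `a ^ 2 / (8 h)` is `m`. -/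
lemma eventually_one_le_tail_add_crossing_add_overshoot (hB : IsStandardBM μ B) (hc : 0 < c)
    (hN : 0 ≤ N) :
    ∀ᶠ m : ℕ in atTop, 1 ≤ exp (-(c ^ 2 * m / 8))
      + exp (2 * c * (N + 1 / m)) * μ.real {ω | ∃ t : ℝ, 0 ≤ t ∧ B t ω - c * t > N}
      + 8 * exp (2 * c * N) * (m ^ 4 * exp (-m)) := by
  filter_upwards [eventually_ge_atTop 1,
    tendsto_natCast_atTop_atTop.eventually_ge_atTop (2 * N / c),
    tendsto_natCast_atTop_atTop.eventually_ge_atTop c] with m hm1 hmN hmc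
  have hm : (1 : ℝ) ≤ m := by exact_mod_cast hm1
  have hnh : ((8 * m ^ 4 : ℕ) : ℝ) * (1 / (8 * m ^ 3)) = m := by
    push_cast
    field_simp
  have hbound := hB.one_le_tail_add_crossing_add_overshoot hc.le hN (h := 1 / (8 * m ^ 3))
    (by positivity) (n := 8 * m ^ 4) (a := 1 / m) ?_ ?_
  · refine hbound.trans_eq ?_
    rw [hnh, show 2 * c * N - (1 / (m : ℝ)) ^ 2 / (8 * (1 / (8 * m ^ 3))) = 2 * c * N + -m by
      field_simp; ring, exp_add]
    push_cast
    ring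
  · rw [hnh]
    linarith [(div_le_iff₀ hc).1 hmN]
  · rw [mul_one_div, div_le_div_iff₀ (by positivity) (by positivity)]
    nlinarith [mul_le_mul_of_nonneg_right hmc (by positivity : (0 : ℝ) ≤ 4 * m),
      mul_le_mul_of_nonneg_right hm (by positivity : (0 : ℝ) ≤ 4 * m ^ 2)]

lemma exp_le_measureReal_exists_sub_mul_gt (hB : IsStandardBM μ B) (hc : 0 < c) (hN : 0 ≤ N) :
    exp (-(2 * c * N)) ≤ μ.real {ω | ∃ t : ℝ, 0 ≤ t ∧ B t ω - c * t > N} := by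
  set R := μ.real {ω | ∃ t : ℝ, 0 ≤ t ∧ B t ω - c * t > N}
  have htail : Tendsto (fun m : ℕ => exp (-(c ^ 2 * m / 8))) atTop (𝓝 0) :=
    tendsto_exp_atBot.comp (tendsto_neg_atTop_atBot.comp
      ((tendsto_natCast_atTop_atTop.const_mul_atTop (by positivity)).atTop_div_const (by norm_num)))
  have hcross : Tendsto (fun m : ℕ => exp (2 * c * (N + 1 / m)) * R) atTop
      (𝓝 (exp (2 * c * N) * R)) := by
    simpa using
      ((tendsto_one_div_atTop_nhds_zero_nat.const_add N).const_mul (2 * c)).rexp.mul_const R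
  have hovershoot :
      Tendsto (fun m : ℕ => 8 * exp (2 * c * N) * (m ^ 4 * exp (-m))) atTop (𝓝 0) := by
    simpa using ((tendsto_pow_mul_exp_neg_atTop_nhds_zero 4).comp
      tendsto_natCast_atTop_atTop).const_mul (8 * exp (2 * c * N))
  have := ge_of_tendsto ((htail.add hcross).add hovershoot)
    (hB.eventually_one_le_tail_add_crossing_add_overshoot hc hN)
  rw [zero_add, add_zero] at this
  rwa [exp_neg, inv_le_iff_one_le_mul₀' (exp_pos _)]

end IsStandardBM

/-- For a standard Brownian motion `B` and `c > 0`, the random variable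
`sup_{t ≥ 0} (B_t - c t)` is exponentially distributed with parameter `2c`:
for every `N ≥ 0`, `P(sup_{t ≥ 0} (B_t - c t) > N) = e^{-2Nc}`. -/
theorem brownian_drift_sup_exponential
    {Ω : Type*} [MeasurableSpace Ω] (μ : Measure Ω) [IsProbabilityMeasure μ]
    (B : ℝ → Ω → ℝ) (hB : IsStandardBM μ B) (c : ℝ) (hc : 0 < c) (N : ℝ) (hN : 0 ≤ N) :
    μ {ω | ∃ t : ℝ, 0 ≤ t ∧ B t ω - c * t > N} = ENNReal.ofReal (Real.exp (-2 * N * c)) := by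
  rw [show -2 * N * c = -(2 * c * N) by ring]
  refine le_antisymm (hB.measure_exists_sub_mul_gt_le hc.le hN) ?_
  rw [ENNReal.ofReal_le_iff_le_toReal (measure_ne_top _ _)]
  exact hB.exp_le_measureReal_exists_sub_mul_gt hc hN
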